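/- Let k ≥ 2, let S = S^{k−1} be the unit sphere of ℝ^k, and let x₁, x₂, … be i.i.d. ℝ^k-valued random variables distributed as x with E‖x‖^p < ∞ for every p ≥ 1. Let G_n(V) = n^{-1/2}·Σ_{i=1}^n (⟨x_i, V⟩ − E⟨x, V⟩) be the empirical tangent field, viewed (via its almost surely Lipschitz realization) as a random element of the Banach space C(S, ℝ) with the supremum norm. Then the sequence of laws of G_n on C(S, ℝ) is tight: for every ε > 0 there is a compact set K ⊆ C(S, ℝ) such that P(G_n ∈ K) > 1 − ε for all n ≥ 1. -/

import Mathlib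

open MeasureTheory ProbabilityTheory Metric Filter Topology
open scoped RealInnerProductSpace NNReal ENNReal

/-- The empirical tangent field
`G_n(V) = n^{-1/2} ∑_{i=1}^n (⟪xᵢ, V⟫ - E⟪x, V⟫)` induced by random variables
`x₁, x₂, …` distributed as `x₀`. -/
noncomputable def empiricalTangentField {Ω H : Type*} [MeasurableSpace Ω]
    [NormedAddCommGroup H] [InnerProductSpace ℝ H]
    (P : Measure Ω) (x : ℕ → Ω → H) (x₀ : Ω → H)
    (n : ℕ) (V : H) (ω : Ω) : ℝ :=
  (Real.sqrt n)⁻¹ * ∑ i ∈ Finset.range n, (⟪x i ω, V⟫ - ∫ ω', ⟪x₀ ω', V⟫ ∂P)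

/-!
Writing `Sₙ = n^{-1/2} ∑_{i<n} (xᵢ - E x)`, the field is `G_n = ⟪Sₙ, ·⟫`, the image of the random
vector `Sₙ ∈ ℝ^k` under the continuous map `v ↦ ⟪v, ·⟫` from `ℝ^k` to `C(S, ℝ)`. Independence
kills the cross terms of `E‖Sₙ‖²`, so `E‖Sₙ‖² ≤ E‖x - E x‖²` for all `n`; by Chebyshev, `Sₙ`
lies in a fixed closed ball with probability close to `1` uniformly in `n`, and the image of
that compact ball is the required compact set of `C(S, ℝ)`.
-/

section Hilbert

variable {Ω H : Type*} [MeasurableSpace Ω] {P : Measure Ω}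
  [NormedAddCommGroup H] [InnerProductSpace ℝ H]

theorem MeasureTheory.MemLp.integrable_inner {f g : Ω → H} (hf : MemLp f 2 P)
    (hg : MemLp g 2 P) : Integrable (fun ω => ⟪f ω, g ω⟫) P :=
  memLp_one_iff_integrable.1 <| hf.of_bilin (fun u v => ⟪u, v⟫) 1 hg (hf.1.inner hg.1)
    (ae_of_all _ fun ω => by simpa using nnnorm_inner_le_nnnorm (𝕜 := ℝ) (f ω) (g ω))

theorem integral_norm_sum_sq_of_indepFun [MeasurableSpace H] [BorelSpace H] [CompleteSpace H]
    [IsFiniteMeasure P] {ι : Type*} {Y : ι → Ω → H} {s : Finset ι}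
    (hY : ∀ i ∈ s, MemLp (Y i) 2 P) (hmean : ∀ i ∈ s, ∫ ω, Y i ω ∂P = 0)
    (hindep : Set.Pairwise s fun i j => IndepFun (Y i) (Y j) P) :
    ∫ ω, ‖∑ i ∈ s, Y i ω‖ ^ 2 ∂P = ∑ i ∈ s, ∫ ω, ‖Y i ω‖ ^ 2 ∂P := by
  have hcross : ∀ i ∈ s, ∀ j ∈ s, j ≠ i → ∫ ω, ⟪Y i ω, Y j ω⟫ ∂P = 0 := fun i hi j hj hji => by
    have := (hindep hi hj hji.symm).integral_bilin
      ((hY i hi).integrable one_le_two) ((hY j hj).integrable one_le_two) (innerSL ℝ)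
    rwa [hmean i hi, map_zero, zero_apply] at this
  calc ∫ ω, ‖∑ i ∈ s, Y i ω‖ ^ 2 ∂P = ∫ ω, ∑ i ∈ s, ∑ j ∈ s, ⟪Y i ω, Y j ω⟫ ∂P := by
        simp_rw [← real_inner_self_eq_norm_sq, sum_inner, inner_sum]
    _ = ∑ i ∈ s, ∑ j ∈ s, ∫ ω, ⟪Y i ω, Y j ω⟫ ∂P := by
        rw [integral_finsetSum _ fun i hi => integrable_finsetSum _ fun j hj =>
          (hY i hi).integrable_inner (hY j hj)]
        exact Finset.sum_congr rfl fun i hi => integral_finsetSum _ fun j hj =>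
          (hY i hi).integrable_inner (hY j hj)
    _ = ∑ i ∈ s, ∫ ω, ‖Y i ω‖ ^ 2 ∂P := by
        refine Finset.sum_congr rfl fun i hi => ?_
        simp_rw [Finset.sum_eq_single_of_mem i hi (hcross i hi), real_inner_self_eq_norm_sq]

noncomputable def normalizedCenteredSum (P : Measure Ω) (x : ℕ → Ω → H) (x₀ : Ω → H) (n : ℕ)
    (ω : Ω) : H :=
  (Real.sqrt n)⁻¹ • ∑ i ∈ Finset.range n, (x i ω - ∫ ω', x₀ ω' ∂P)

theorem empiricalTangentField_eq_inner [CompleteSpace H] {x : ℕ → Ω → H} {x₀ : Ω → H}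
    (hx₀ : Integrable x₀ P) (n : ℕ) (V : H) (ω : Ω) :
    empiricalTangentField P x x₀ n V ω = ⟪normalizedCenteredSum P x x₀ n ω, V⟫ := by
  rw [empiricalTangentField, normalizedCenteredSum, real_inner_smul_left, sum_inner]
  simp_rw [real_inner_comm V, inner_sub_right, integral_inner hx₀ V]

theorem memLp_normalizedCenteredSum [MeasurableSpace H] [BorelSpace H] [IsFiniteMeasure P]
    {x : ℕ → Ω → H} {x₀ : Ω → H}
    (hid : ∀ i, IdentDistrib (x i) x₀ P P) (hx₀ : MemLp x₀ 2 P) (n : ℕ) :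
    MemLp (normalizedCenteredSum P x x₀ n) 2 P :=
  (memLp_finsetSum _ fun i _ => ((hid i).memLp_iff.2 hx₀).sub (memLp_const _)).const_smul _

theorem integral_norm_sq_normalizedCenteredSum_le [MeasurableSpace H] [BorelSpace H]
    [CompleteSpace H] [IsProbabilityMeasure P] {x : ℕ → Ω → H} {x₀ : Ω → H}
    (hindep : Pairwise fun i j => IndepFun (x i) (x j) P) (hid : ∀ i, IdentDistrib (x i) x₀ P P)
    (hx₀ : MemLp x₀ 2 P) (n : ℕ) :
    ∫ ω, ‖normalizedCenteredSum P x x₀ n ω‖ ^ 2 ∂P ≤ ∫ ω, ‖x₀ ω - ∫ ω', x₀ ω' ∂P‖ ^ 2 ∂P := by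
  set m := ∫ ω', x₀ ω' ∂P
  have hsub : Measurable fun v : H => v - m := (continuous_sub_right m).measurable
  have hidY : ∀ i, IdentDistrib (fun ω => x i ω - m) (fun ω => x₀ ω - m) P P :=
    fun i => (hid i).comp hsub
  have hY : ∀ i, MemLp (fun ω => x i ω - m) 2 P :=
    fun i => (hidY i).memLp_iff.2 (hx₀.sub (memLp_const m))
  have hmean : ∀ i, ∫ ω, x i ω - m ∂P = 0 := fun i => by
    rw [(hidY i).integral_eq, integral_sub (hx₀.integrable one_le_two) (integrable_const m),
      integral_const, probReal_univ, one_smul, sub_self]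
  have hsum := integral_norm_sum_sq_of_indepFun (s := Finset.range n) (fun i _ => hY i)
    (fun i _ => hmean i) fun i _ j _ hij => (hindep hij).comp hsub hsub
  have hnorm : ∀ i, ∫ ω, ‖x i ω - m‖ ^ 2 ∂P = ∫ ω, ‖x₀ ω - m‖ ^ 2 ∂P :=
    fun i => ((hidY i).comp (continuous_norm.pow 2).measurable).integral_eq
  simp only [hnorm, Finset.sum_const, Finset.card_range, nsmul_eq_mul] at hsum
  have hvar_nonneg : 0 ≤ ∫ ω, ‖x₀ ω - m‖ ^ 2 ∂P := integral_nonneg fun ω => by positivity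
  calc ∫ ω, ‖normalizedCenteredSum P x x₀ n ω‖ ^ 2 ∂P
      = (n : ℝ)⁻¹ * ∫ ω, ‖∑ i ∈ Finset.range n, (x i ω - m)‖ ^ 2 ∂P := by
        simp_rw [normalizedCenteredSum, norm_smul, norm_inv, Real.norm_eq_abs, mul_pow, inv_pow,
          sq_abs, Real.sq_sqrt n.cast_nonneg, integral_const_mul, m]
    _ = (n : ℝ)⁻¹ * n * ∫ ω, ‖x₀ ω - m‖ ^ 2 ∂P := by rw [hsum, mul_assoc]
    _ ≤ ∫ ω, ‖x₀ ω - m‖ ^ 2 ∂P := mul_le_of_le_one_left hvar_nonneg inv_mul_le_one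

end Hilbert

theorem ENNReal.one_sub_lt_of_one_le_add {a b c : ℝ≥0∞} (h : 1 ≤ b + c) (hca : c < a)
    (hc : c < 1) : 1 - a < b := by
  rcases eq_or_ne b ⊤ with rfl | hb
  · exact tsub_le_self.trans_lt one_lt_top
  rcases le_or_gt a 1 with ha | ha
  · rw [ENNReal.sub_lt_iff_lt_right (ne_top_of_le_ne_top one_ne_top ha) ha]
    exact h.trans_lt (ENNReal.add_lt_add_left hb hca)
  · rw [tsub_eq_zero_of_le ha.le, pos_iff_ne_zero]
    rintro rfl
    exact (zero_add c ▸ h).not_gt hc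

section Tightness

variable {Ω ι E : Type*} [MeasurableSpace Ω] {P : Measure Ω} [NormedAddCommGroup E]
  {Y : ι → Ω → E} {C : ℝ}

theorem exists_forall_measure_lt_norm_lt [IsFiniteMeasure P] (hY : ∀ i, MemLp (Y i) 2 P)
    (hC : ∀ i, ∫ ω, ‖Y i ω‖ ^ 2 ∂P ≤ C) {δ : ℝ} (hδ : 0 < δ) :
    ∃ L, ∀ i, P {ω | L < ‖Y i ω‖} < ENNReal.ofReal δ := by
  obtain ⟨L, hL, hCL⟩ := ((eventually_gt_atTop 0).and ((tendsto_const_nhds (x := C)).div_atTop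
    (tendsto_pow_atTop two_ne_zero) |>.eventually (gt_mem_nhds hδ))).exists
  refine ⟨L, fun i => ?_⟩
  have hmarkov := mul_meas_ge_le_integral_of_nonneg (ae_of_all _ fun ω => by positivity)
    ((memLp_two_iff_integrable_sq_norm (hY i).1).1 (hY i)) (L ^ 2)
  calc P {ω | L < ‖Y i ω‖} ≤ P {ω | L ^ 2 ≤ ‖Y i ω‖ ^ 2} :=
        measure_mono fun ω (hω : L < ‖Y i ω‖) =>
          show L ^ 2 ≤ ‖Y i ω‖ ^ 2 from pow_le_pow_left₀ hL.le hω.le 2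
    _ = ENNReal.ofReal (P.real {ω | L ^ 2 ≤ ‖Y i ω‖ ^ 2}) := (ofReal_measureReal).symm
    _ ≤ ENNReal.ofReal (C / L ^ 2) :=
        ENNReal.ofReal_le_ofReal ((le_div_iff₀' (pow_pos hL 2)).2 (hmarkov.trans (hC i)))
    _ < ENNReal.ofReal δ := (ENNReal.ofReal_lt_ofReal_iff hδ).2 hCL

theorem exists_isCompact_forall_one_sub_lt_measure_preimage [IsProbabilityMeasure P]
    [ProperSpace E] {X : Type*} [TopologicalSpace X] {F : E → X} (hF : Continuous F) {G : ι → Ω → X}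
    (hG : ∀ i, G i =ᵐ[P] F ∘ Y i) (hY : ∀ i, MemLp (Y i) 2 P)
    (hC : ∀ i, ∫ ω, ‖Y i ω‖ ^ 2 ∂P ≤ C) {ε : ℝ} (hε : 0 < ε) :
    ∃ K, IsCompact K ∧ ∀ i, 1 - ENNReal.ofReal ε < P (G i ⁻¹' K) := by
  obtain ⟨L, hL⟩ := exists_forall_measure_lt_norm_lt hY hC (lt_min hε one_pos)
  refine ⟨F '' closedBall 0 L, (isCompact_closedBall 0 L).image hF, fun i => ?_⟩
  have hball : {ω | L < ‖Y i ω‖}ᶜ ⊆ (F ∘ Y i) ⁻¹' (F '' closedBall 0 L) :=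
    fun ω hω => ⟨Y i ω, mem_closedBall_zero_iff.2 (not_lt.1 hω), rfl⟩
  refine ENNReal.one_sub_lt_of_one_le_add ?_
    ((hL i).trans_le (ENNReal.ofReal_le_ofReal (min_le_left _ _)))
    ((hL i).trans_le (ENNReal.ofReal_le_one.2 (min_le_right _ _)))
  calc 1 ≤ P {ω | L < ‖Y i ω‖} + P {ω | L < ‖Y i ω‖}ᶜ := by
        simpa using measure_univ_le_add_compl (μ := P) {ω | L < ‖Y i ω‖}
    _ ≤ P {ω | L < ‖Y i ω‖} + P (G i ⁻¹' (F '' closedBall 0 L)) := by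
        rw [measure_congr ((hG i).preimage _)]
        exact add_le_add le_rfl (measure_mono hball)
    _ = _ := add_comm _ _

end Tightness

theorem empiricalTangentField_tight_general
    (k : ℕ)
    {Ω : Type*} [MeasurableSpace Ω] (P : Measure Ω) [IsProbabilityMeasure P]
    (x : ℕ → Ω → EuclideanSpace ℝ (Fin k)) (x₀ : Ω → EuclideanSpace ℝ (Fin k))
    (hindep : iIndepFun
      (m := fun _ : ℕ => (inferInstance : MeasurableSpace (EuclideanSpace ℝ (Fin k)))) x P)
    (hid : ∀ i, IdentDistrib (x i) x₀ P P)
    (hmom : ∀ p : ℕ, 1 ≤ p → Integrable (fun ω => ‖x₀ ω‖ ^ p) P)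
    (Gc : ℕ → Ω → C(sphere (0 : EuclideanSpace ℝ (Fin k)) 1, ℝ))
    (hGc : ∀ n, ∀ᵐ ω ∂P, ∀ V : sphere (0 : EuclideanSpace ℝ (Fin k)) 1,
      Gc n ω V = empiricalTangentField P x x₀ n (V : EuclideanSpace ℝ (Fin k)) ω) :
    ∀ ε : ℝ, 0 < ε →
      ∃ K : Set C(sphere (0 : EuclideanSpace ℝ (Fin k)) 1, ℝ),
        IsCompact K ∧ ∀ n : ℕ, 1 ≤ n → 1 - ENNReal.ofReal ε < P (Gc n ⁻¹' K) := by
  intro ε hε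
  have hx₀ : MemLp x₀ 2 P :=
    (memLp_two_iff_integrable_sq_norm (hid 0).aemeasurable_snd.aestronglyMeasurable).2
      (hmom 2 one_le_two)
  let F : C(EuclideanSpace ℝ (Fin k), C(sphere (0 : EuclideanSpace ℝ (Fin k)) 1, ℝ)) :=
    ContinuousMap.curry ⟨fun p => ⟪p.1, (p.2 : EuclideanSpace ℝ (Fin k))⟫, by fun_prop⟩
  have hGcF : ∀ n, Gc n =ᵐ[P] F ∘ normalizedCenteredSum P x x₀ n := fun n => by
    filter_upwards [hGc n] with ω hω
    ext V
    rw [hω V, empiricalTangentField_eq_inner (hx₀.integrable one_le_two)]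
    rfl
  obtain ⟨K, hK, hKP⟩ := exists_isCompact_forall_one_sub_lt_measure_preimage F.continuous hGcF
    (memLp_normalizedCenteredSum hid hx₀)
    (integral_norm_sq_normalizedCenteredSum_le (fun _ _ hij => hindep.indepFun hij) hid hx₀) hε
  exact ⟨K, hK, fun n _ => hKP n⟩

/-- Tightness of the empirical tangent fields in `C(S, ℝ)`: if `x₁, x₂, …` are i.i.d.
`ℝ^k`-valued random variables with all moments `E‖x‖^p` finite, and `Gc n : Ω → C(S, ℝ)`
is the continuous realization of the empirical tangent field `G_n` on the unit sphere
`S = S^{k-1}`, then the laws of the `Gc n` are tight: for every `ε > 0` there is a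
compact set `K ⊆ C(S, ℝ)` with `P(Gc n ∈ K) > 1 - ε` for all `n ≥ 1`. -/
theorem empiricalTangentField_tight
    (k : ℕ) (hk : 2 ≤ k)
    {Ω : Type*} [MeasurableSpace Ω] (P : Measure Ω) [IsProbabilityMeasure P]
    (x : ℕ → Ω → EuclideanSpace ℝ (Fin k)) (x₀ : Ω → EuclideanSpace ℝ (Fin k))
    (hx₀ : Measurable x₀) (hx : ∀ i, Measurable (x i))
    (hindep : iIndepFun
      (m := fun _ : ℕ => (inferInstance : MeasurableSpace (EuclideanSpace ℝ (Fin k)))) x P)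
    (hid : ∀ i, IdentDistrib (x i) x₀ P P)
    (hmom : ∀ p : ℕ, 1 ≤ p → Integrable (fun ω => ‖x₀ ω‖ ^ p) P)
    (Gc : ℕ → Ω → C(sphere (0 : EuclideanSpace ℝ (Fin k)) 1, ℝ))
    (hGc : ∀ n, ∀ᵐ ω ∂P, ∀ V : sphere (0 : EuclideanSpace ℝ (Fin k)) 1,
      Gc n ω V = empiricalTangentField P x x₀ n (V : EuclideanSpace ℝ (Fin k)) ω) :
    ∀ ε : ℝ, 0 < ε →
      ∃ K : Set C(sphere (0 : EuclideanSpace ℝ (Fin k)) 1, ℝ),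
        IsCompact K ∧ ∀ n : ℕ, 1 ≤ n → 1 - ENNReal.ofReal ε < P (Gc n ⁻¹' K) :=
  empiricalTangentField_tight_general k P x x₀ hindep hid hmom Gc hGc
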